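/- arXiv:2001.04896 — 3 statements merged into one kernel-verified Lean document; each statement's English description precedes it below -/
import Mathlib

section
/- Let σ be a nonempty closed bounded subset of ℝ^D, and let r(σ) denote the radius of the smallest enclosing ball of σ. Then every point y of the convex hull of σ satisfies d(y, σ) ≤ r(σ); that is, the asymmetric Hausdorff distance from Conv(σ) to σ is at most r(σ). -/
/-!
For any ball `closedBall z r ⊇ σ` and `y` at distance `d` from `σ`, the set
`{x | ‖x - z‖² - r² ≤ ‖x - y‖² - d²}` is a half-space (the quadratic terms cancel) containing `σ`,
hence also `y ∈ convexHull ℝ σ`. Evaluated at `y` this gives `d² + ‖y - z‖² ≤ r²`, so `d ≤ r`, and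
taking the infimum over enclosing balls gives `d ≤ r(σ)`.
-/

open Metric Set

noncomputable section

variable {D d : ℕ}

/-- Radius of the smallest enclosing ball of a set: infimum over centers `z` of the
smallest `r` with `σ ⊆ closedBall z r`. -/
def sebRadius (σ : Set (EuclideanSpace ℝ (Fin D))) : ℝ :=
  sInf {r : ℝ | ∃ z : EuclideanSpace ℝ (Fin D), σ ⊆ Metric.closedBall z r}

/-- The `t`-convex hull `Conv(t, A) = ⋃ {Conv σ : σ ⊆ A, r(σ) ≤ t}`. -/
def tConv (t : ℝ) (A : Set (EuclideanSpace ℝ (Fin D))) : Set (EuclideanSpace ℝ (Fin D)) :=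
  ⋃ σ ∈ {σ : Set (EuclideanSpace ℝ (Fin D)) | σ ⊆ A ∧ sebRadius σ ≤ t}, convexHull ℝ σ

/-- The convexity defect function `h(t, A) = d_H(Conv(t,A), A)`. -/
def convDefect (t : ℝ) (A : Set (EuclideanSpace ℝ (Fin D))) : ℝ :=
  Metric.hausdorffDist (tConv t A) A

/-- `Rad(A) = {r(σ) : σ ⊆ A}`. -/
def radSet (A : Set (EuclideanSpace ℝ (Fin D))) : Set ℝ :=
  {r : ℝ | ∃ σ ⊆ A, sebRadius σ = r}

/-- `t_λ(A) = inf {t ∈ Rad(A) : h(t,A) ≤ λ t}`. -/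
def tSel (lam : ℝ) (A : Set (EuclideanSpace ℝ (Fin D))) : ℝ :=
  sInf {t : ℝ | t ∈ radSet A ∧ convDefect t A ≤ lam * t}

/-- `x` has a unique metric projection onto `M`. -/
def uniqueProj (M : Set (EuclideanSpace ℝ (Fin D))) (x : EuclideanSpace ℝ (Fin D)) : Prop :=
  ∃! y, y ∈ M ∧ dist x y = Metric.infDist x M

/-- The reach of a set `M`: the largest `r` such that every point at distance `< r` from `M`
has a unique nearest point on `M`. -/
def reach (M : Set (EuclideanSpace ℝ (Fin D))) : ℝ :=
  sSup {r : ℝ | ∀ x : EuclideanSpace ℝ (Fin D), Metric.infDist x M < r → uniqueProj M x}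

open Classical in
/-- The metric projection onto `M` (an arbitrary nearest point, when one exists). -/
def projOn (M : Set (EuclideanSpace ℝ (Fin D))) (x : EuclideanSpace ℝ (Fin D)) :
    EuclideanSpace ℝ (Fin D) :=
  if h : ∃ y, y ∈ M ∧ dist x y = Metric.infDist x M then h.choose else x

/-- `t*(A) = inf {s < τ(M) : π_M(Conv(s,A)) = M}`. -/
def tStar (A M : Set (EuclideanSpace ℝ (Fin D))) : ℝ :=
  sInf {s : ℝ | s < reach M ∧ projOn M '' tConv s A = M}

/-- The approximation rate `ε(A) = sup {d(x, A) : x ∈ M}`. -/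
def epsRate (M A : Set (EuclideanSpace ℝ (Fin D))) : ℝ :=
  sSup ((fun x => Metric.infDist x A) '' M)

/-- `M ⊆ ℝ^D` is a `d`-dimensional `C²` submanifold: around each of its points, `M` is the
image of an injective `C²` immersion from an open subset of `ℝ^d`. -/
def IsC2Submanifold (d : ℕ) (M : Set (EuclideanSpace ℝ (Fin D))) : Prop :=
  ∀ x ∈ M, ∃ (φ : EuclideanSpace ℝ (Fin d) → EuclideanSpace ℝ (Fin D))
    (u : Set (EuclideanSpace ℝ (Fin d))) (V : Set (EuclideanSpace ℝ (Fin D))),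
      IsOpen u ∧ (0 : EuclideanSpace ℝ (Fin d)) ∈ u ∧ φ 0 = x ∧ IsOpen V ∧ x ∈ V ∧
      ContDiffOn ℝ 2 φ u ∧ Set.InjOn φ u ∧ φ '' u = M ∩ V ∧
      ∀ y ∈ u, Function.Injective (fderiv ℝ φ y)

/-- The set of tangent vectors to `M` at `x`, realized as velocities of curves in `M`. -/
def tangentVectorsAt (M : Set (EuclideanSpace ℝ (Fin D))) (x : EuclideanSpace ℝ (Fin D)) :
    Set (EuclideanSpace ℝ (Fin D)) :=
  {v | ∃ γ : ℝ → EuclideanSpace ℝ (Fin D), (∀ s, γ s ∈ M) ∧ γ 0 = x ∧ HasDerivAt γ v 0}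

section InnerProductSpace

variable {E : Type*} [SeminormedAddCommGroup E] [InnerProductSpace ℝ E]

theorem convex_setOf_norm_sub_sq_sub_norm_sub_sq_le (y z : E) (c : ℝ) :
    Convex ℝ {x : E | ‖x - z‖ ^ 2 - ‖x - y‖ ^ 2 ≤ c} := by
  have hlin : IsLinearMap ℝ (innerₛₗ ℝ (y - z)) := (innerₛₗ ℝ (y - z)).isLinear
  convert convex_halfSpace_le hlin ((c - ‖z‖ ^ 2 + ‖y‖ ^ 2) / 2) using 1
  ext x
  simp only [mem_ofPred_eq, innerₛₗ_apply_apply]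
  rw [real_inner_comm, inner_sub_right, norm_sub_sq_real, norm_sub_sq_real]
  constructor <;> intro h <;> linarith

theorem infDist_sq_add_dist_sq_le_of_mem_convexHull {σ : Set E} {y z : E} {r : ℝ}
    (hy : y ∈ convexHull ℝ σ) (hσ : σ ⊆ closedBall z r) :
    infDist y σ ^ 2 + dist y z ^ 2 ≤ r ^ 2 := by
  set d := infDist y σ
  have hσH : σ ⊆ {x : E | ‖x - z‖ ^ 2 - ‖x - y‖ ^ 2 ≤ r ^ 2 - d ^ 2} := by
    intro x hx
    have hxz : ‖x - z‖ ≤ r := mem_closedBall_iff_norm.mp (hσ hx)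
    have hxy : d ≤ ‖x - y‖ := by
      rw [← dist_eq_norm, dist_comm]
      exact infDist_le_dist_of_mem hx
    have : ‖x - z‖ ^ 2 ≤ r ^ 2 := pow_le_pow_left₀ (norm_nonneg _) hxz 2
    have : d ^ 2 ≤ ‖x - y‖ ^ 2 := pow_le_pow_left₀ infDist_nonneg hxy 2
    simp only [mem_ofPred_eq]
    linarith
  have hyH := convexHull_min hσH (convex_setOf_norm_sub_sq_sub_norm_sub_sq_le y z _) hy
  simp only [mem_ofPred_eq, sub_self, norm_zero] at hyH
  rw [dist_eq_norm]
  linarith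

theorem infDist_le_of_mem_convexHull_of_subset_closedBall {σ : Set E} {y z : E} {r : ℝ}
    (hy : y ∈ convexHull ℝ σ) (hσ : σ ⊆ closedBall z r) : infDist y σ ≤ r := by
  obtain ⟨x, hx⟩ := convexHull_nonempty_iff.mp ⟨y, hy⟩
  have hr : 0 ≤ r := dist_nonneg.trans (hσ hx)
  refine le_of_pow_le_pow_left₀ two_ne_zero hr ?_
  linarith [infDist_sq_add_dist_sq_le_of_mem_convexHull hy hσ, sq_nonneg (dist y z)]

end InnerProductSpace

theorem convexHull_infDist_le_sebRadius_general {D : ℕ}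
    (σ : Set (EuclideanSpace ℝ (Fin D)))
    (hbd : Bornology.IsBounded σ) :
    ∀ y ∈ convexHull ℝ σ, Metric.infDist y σ ≤ sebRadius σ := by
  intro y hy
  obtain ⟨R, hR⟩ := hbd.subset_closedBall 0
  refine le_csInf ⟨R, 0, hR⟩ ?_
  rintro r ⟨z, hz⟩
  exact infDist_le_of_mem_convexHull_of_subset_closedBall hy hz

/-- Every point of the convex hull of a nonempty closed bounded set `σ ⊆ ℝ^D` is within
distance `r(σ)` of `σ`: `d_H(Conv(σ) | σ) ≤ r(σ)`. -/
theorem convexHull_infDist_le_sebRadius {D : ℕ}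
    (σ : Set (EuclideanSpace ℝ (Fin D))) (hne : σ.Nonempty) (hcl : IsClosed σ)
    (hbd : Bornology.IsBounded σ) :
    ∀ y ∈ convexHull ℝ σ, Metric.infDist y σ ≤ sebRadius σ :=
  convexHull_infDist_le_sebRadius_general σ hbd
end
end

section
/- Let M be a compact C² submanifold of ℝ^D with reach τ(M) > 0. Let σ ⊆ M be a set with radius r(σ) < τ(M) (radius of the smallest enclosing ball), and let y be a point of the convex hull of σ. Then the distance from y to M satisfies d(y, M) ≤ τ(M)(1 − √(1 − r(σ)²/τ(M)²)) ≤ (r(σ)²/(2τ(M)))·(1 + r(σ)²/τ(M)²). -/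
/-!
Let `y` lie in the hull at distance `δ < τ = reach M`. Below the reach nearest points are unique,
hence depend continuously on the point, so the distance to `M` grows at rate almost `1` along
the normal direction. Pushing away from `M` this way yields a point `c` with `|y - c| ≤ τ - δ`
and `d(c, M)` as close to `τ` as we like. Then `σ ⊆ M` avoids the open ball `B(c, τ)` while lying
in a ball `B̄(z, r)`; as `|v - c|² - |v - z|²` is affine in `v`, the bound `τ² - r²` it satisfies on
`σ` persists on the hull, so `τ² - r² ≤ |y - c|² ≤ (τ - δ)²`, i.e. `δ ≤ τ - √(τ² - r²)`. The
distances attained on the connected hull form an interval containing `0`, so `δ ≥ τ` is excluded.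
-/

open Metric Set

noncomputable section

variable {D d : ℕ}

open Filter Topology

theorem IsPreconnected.subset_Iic_of_forall_notMem_Ioo {α : Type*} [LinearOrder α]
    [TopologicalSpace α] [OrderClosedTopology α] [DenselyOrdered α] {S : Set α}
    (hS : IsPreconnected S) {a b c : α} (ha : a ∈ S) (hab : a ≤ b) (hbc : b < c)
    (hgap : ∀ s ∈ S, s ∉ Ioo b c) : S ⊆ Iic b := by
  intro s hs
  rw [mem_Iic]
  by_contra! hbs
  obtain ⟨v, hbv, hvc⟩ := exists_between hbc
  have hmem : min s v ∈ S := hS.Icc_subset ha hs ⟨hab.trans (lt_min hbs hbv).le, min_le_left _ _⟩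
  exact hgap _ hmem ⟨lt_min hbs hbv, (min_le_right _ _).trans_lt hvc⟩

theorem IsCompact.eventually_forall_nearest_dist_lt {X : Type*} [PseudoMetricSpace X]
    {M : Set X} (hM : IsCompact M) {p m : X}
    (huniq : ∀ m' ∈ M, dist p m' = infDist p M → m' = m) {ε : ℝ} (hε : 0 < ε) :
    ∀ᶠ q in 𝓝 p, ∀ m' ∈ M, dist q m' = infDist q M → dist m' m < ε := by
  set K := M ∩ {x | ε ≤ dist x m}
  rcases K.eq_empty_or_nonempty with hK | hK
  · refine Eventually.of_forall fun q m' hm' _ => not_le.1 fun h => ?_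
    exact (hK ▸ (⟨hm', h⟩ : m' ∈ K) : m' ∈ (∅ : Set X))
  obtain ⟨k, hkK, hk⟩ := (hM.inter_right (isClosed_le continuous_const
    (continuous_id.dist continuous_const))).exists_infDist_eq_dist hK p
  have hgap : infDist p M < dist p k := by
    refine (infDist_le_dist_of_mem hkK.1).lt_of_ne fun h => ?_
    have hkm := huniq k hkK.1 h.symm
    exact hε.not_ge (by simpa [hkm] using hkK.2)
  filter_upwards [ball_mem_nhds p (half_pos (sub_pos.2 hgap))] with q hq m' hm' hnear
  by_contra! hfar
  have h1 : dist p k ≤ dist p m' := hk ▸ infDist_le_dist_of_mem ⟨hm', hfar⟩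
  have h2 : dist p m' ≤ dist q p + infDist q M := hnear ▸ dist_triangle_left p m' q
  have h3 : infDist q M ≤ infDist p M + dist q p := infDist_le_infDist_add_dist
  rw [mem_ball] at hq
  linarith

theorem le_dist_add_smul_of_dist_le {E : Type*} [NormedAddCommGroup E] [InnerProductSpace ℝ E]
    {p m m' g : E} {δ ε h : ℝ} (hg : ‖g‖ = 1) (hpm : p - m = δ • g) (hδ : 0 ≤ δ)
    (hpm' : δ ≤ dist p m') (hmm' : dist m' m ≤ ε * δ) (hε0 : 0 ≤ ε) (hε1 : ε ≤ 1) (hh : 0 ≤ h) :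
    δ + (1 - ε) * h ≤ dist (p + h • g) m' := by
  have hinner : δ - ε * δ ≤ inner ℝ (p - m') g := by
    have hsplit : p - m' = δ • g + (m - m') := by rw [← hpm]; abel
    have hcs := real_inner_le_norm (m' - m) g
    rw [hsplit, inner_add_left, real_inner_smul_left, real_inner_self_eq_norm_sq, hg,
      ← neg_sub m' m, inner_neg_left]
    rw [hg, ← dist_eq_norm] at hcs
    nlinarith
  have hsq : (δ + (1 - ε) * h) ^ 2 ≤ dist (p + h • g) m' ^ 2 := by
    have hexp : dist (p + h • g) m' ^ 2 = dist p m' ^ 2 + 2 * h * inner ℝ (p - m') g + h ^ 2 := by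
      rw [dist_eq_norm, dist_eq_norm, show p + h • g - m' = (p - m') + h • g by abel,
        norm_add_sq_real, inner_smul_right, norm_smul, Real.norm_eq_abs, abs_of_nonneg hh, hg]
      ring
    rw [hexp]
    nlinarith [mul_le_mul_of_nonneg_left hinner hh, pow_le_pow_left₀ hδ hpm' 2,
      mul_nonneg (mul_nonneg hε0 (by linarith : (0:ℝ) ≤ 2 - ε)) (sq_nonneg h)]
  exact (abs_le_of_sq_le_sq' hsq dist_nonneg).2

theorem sq_sub_sq_le_of_mem_convexHull {E : Type*} [NormedAddCommGroup E] [InnerProductSpace ℝ E]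
    {σ : Set E} {c z w : E} {R ρ : ℝ} (hR : 0 ≤ R) (hc : ∀ x ∈ σ, R ≤ dist x c)
    (hz : σ ⊆ closedBall z ρ) (hw : w ∈ convexHull ℝ σ) :
    R ^ 2 - ρ ^ 2 ≤ dist w c ^ 2 - dist w z ^ 2 := by
  -- `‖v - c‖² - ‖v - z‖²` is affine in `v`, so the bound passes from `σ` to its hull
  have hexp : ∀ v : E, dist v c ^ 2 - dist v z ^ 2 = ‖c‖ ^ 2 - ‖z‖ ^ 2 + 2 * inner ℝ (z - c) v := by
    intro v
    rw [dist_eq_norm, dist_eq_norm, norm_sub_sq_real, norm_sub_sq_real, inner_sub_left,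
      real_inner_comm c, real_inner_comm z]
    ring
  have hconv : Convex ℝ {v : E | (R ^ 2 - ρ ^ 2 - ‖c‖ ^ 2 + ‖z‖ ^ 2) / 2 ≤ inner ℝ (z - c) v} :=
    convex_halfSpace_ge (innerₛₗ ℝ (z - c)).isLinear _
  have hσ : σ ⊆ {v : E | (R ^ 2 - ρ ^ 2 - ‖c‖ ^ 2 + ‖z‖ ^ 2) / 2 ≤ inner ℝ (z - c) v} := by
    intro x hx
    have h1 := pow_le_pow_left₀ hR (hc x hx) 2
    have h2 := pow_le_pow_left₀ dist_nonneg (mem_closedBall.1 (hz hx)) 2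
    have := hexp x
    simp only [mem_ofPred_eq]
    linarith
  have := convexHull_min hσ hconv hw
  simp only [mem_ofPred_eq] at this
  linarith [hexp w]

theorem sebRadius_nonneg {σ : Set (EuclideanSpace ℝ (Fin D))} (hσ : σ.Nonempty) :
    0 ≤ sebRadius σ := by
  refine Real.sInf_nonneg ?_
  rintro r ⟨z, hz⟩
  exact dist_nonneg.trans (mem_closedBall.1 (hz hσ.some_mem))

theorem exists_subset_closedBall_of_sebRadius_lt {σ : Set (EuclideanSpace ℝ (Fin D))}
    (hσ : Bornology.IsBounded σ) {ρ : ℝ} (h : sebRadius σ < ρ) :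
    ∃ z, σ ⊆ closedBall z ρ := by
  obtain ⟨R, hR⟩ := hσ.subset_closedBall 0
  obtain ⟨r, ⟨z, hz⟩, hrρ⟩ :=
    exists_lt_of_csInf_lt (s := {r | ∃ z, σ ⊆ closedBall z r}) ⟨R, 0, hR⟩ h
  exact ⟨z, hz.trans (closedBall_subset_closedBall hrρ.le)⟩

section Reach

variable {M : Set (EuclideanSpace ℝ (Fin D))}

-- if `{r | …}` is not bounded above, `reach M = 0` and the hypothesis is void
theorem uniqueProj_of_infDist_lt_reach {x : EuclideanSpace ℝ (Fin D)}
    (hx : infDist x M < reach M) : uniqueProj M x := by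
  by_cases hbdd : BddAbove {r : ℝ | ∀ x, infDist x M < r → uniqueProj M x}
  · obtain ⟨r, hr, hxr⟩ :=
      exists_lt_of_lt_csSup ⟨0, fun x hx => (hx.not_ge infDist_nonneg).elim⟩ hx
    exact hr x hxr
  · rw [reach, Real.sSup_of_not_bddAbove hbdd] at hx
    exact (hx.not_ge infDist_nonneg).elim

theorem exists_norm_eq_one_eventually_infDist_add_smul_ge (hM : IsCompact M)
    {p : EuclideanSpace ℝ (Fin D)} (hp0 : 0 < infDist p M) (hp : infDist p M < reach M)
    {ε : ℝ} (hε0 : 0 < ε) (hε1 : ε ≤ 1) :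
    ∃ g : EuclideanSpace ℝ (Fin D), ‖g‖ = 1 ∧
      ∀ᶠ h in 𝓝[>] 0, infDist p M + (1 - ε) * h ≤ infDist (p + h • g) M := by
  have hMne : M.Nonempty := by
    by_contra hM0
    simp [not_nonempty_iff_eq_empty.1 hM0] at hp0
  set δ := infDist p M
  obtain ⟨m, hm, hpm⟩ := hM.exists_infDist_eq_dist hMne p
  obtain ⟨m₀, -, hm₀⟩ := uniqueProj_of_infDist_lt_reach hp
  have huniq : ∀ m' ∈ M, dist p m' = δ → m' = m := fun m' hm' h =>
    (hm₀ m' ⟨hm', h⟩).trans (hm₀ m ⟨hm, hpm.symm⟩).symm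
  set g := δ⁻¹ • (p - m)
  have hδg : p - m = δ • g := by rw [smul_inv_smul₀ hp0.ne']
  have hg : ‖g‖ = 1 := by
    rw [norm_smul, ← dist_eq_norm, ← hpm, norm_inv, Real.norm_of_nonneg hp0.le,
      inv_mul_cancel₀ hp0.ne']
  refine ⟨g, hg, ?_⟩
  have hline : Tendsto (fun h : ℝ => p + h • g) (𝓝[>] 0) (𝓝 p) :=
    ((by fun_prop : Continuous fun h : ℝ => p + h • g).tendsto' 0 p (by simp)).mono_left
      nhdsWithin_le_nhds
  filter_upwards [hline.eventually (hM.eventually_forall_nearest_dist_lt huniq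
    (mul_pos hε0 hp0)), self_mem_nhdsWithin] with h hnear hh
  obtain ⟨m', hm', hqm'⟩ := hM.exists_infDist_eq_dist hMne (p + h • g)
  rw [hqm']
  exact le_dist_add_smul_of_dist_le hg hδg hp0.le (infDist_le_dist_of_mem hm')
    (hnear m' hm' hqm'.symm).le hε0.le hε1 hh.le

-- `c` maximises `infDist · M` over the points reachable from `y` at rate `1 - ε`; if it stopped
-- short of distance `T`, one more step along the normal would beat it.
theorem exists_dist_le_and_add_le_infDist (hM : IsCompact M) {y : EuclideanSpace ℝ (Fin D)}
    (hy : 0 < infDist y M) {T : ℝ} (hT : 0 ≤ T) (hreach : infDist y M + T ≤ reach M)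
    {ε : ℝ} (hε0 : 0 < ε) (hε1 : ε < 1) :
    ∃ c, dist y c ≤ T ∧ infDist y M + (1 - ε) * T ≤ infDist c M := by
  set δ := infDist y M
  set C := {c : EuclideanSpace ℝ (Fin D) | dist c y ≤ T ∧ δ + (1 - ε) * dist c y ≤ infDist c M}
  have hC : IsCompact C :=
    (isCompact_closedBall y T).of_isClosed_subset
      ((isClosed_le (continuous_id.dist continuous_const) continuous_const).inter
        (isClosed_le (continuous_const.add (continuous_const.mul
          (continuous_id.dist continuous_const))) (continuous_infDist_pt M)))
      fun c hc => hc.1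
  obtain ⟨c, ⟨hcT, hcδ⟩, hmax⟩ :=
    hC.exists_isMaxOn ⟨y, by simp [C, hT, δ]⟩ (continuous_infDist_pt M).continuousOn
  refine ⟨c, dist_comm y c ▸ hcT, ?_⟩
  rcases hcT.eq_or_lt with hcT | hcT
  · rwa [hcT] at hcδ
  exfalso
  have hc0 : 0 < infDist c M := hy.trans_le (by nlinarith [dist_nonneg (x := c) (y := y)])
  have hcreach : infDist c M < reach M := by
    linarith [infDist_le_infDist_add_dist (s := M) (x := c) (y := y)]
  obtain ⟨g, hg, hstep⟩ :=
    exists_norm_eq_one_eventually_infDist_add_smul_ge hM hc0 hcreach hε0 hε1.le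
  obtain ⟨h, hh, hhT⟩ := (hstep.and (Ioc_mem_nhdsGT (sub_pos.2 hcT))).exists
  have hdist : dist (c + h • g) y ≤ dist c y + h := by
    calc dist (c + h • g) y ≤ dist (c + h • g) c + dist c y := dist_triangle _ _ _
      _ = dist c y + h := by
        rw [dist_eq_norm, add_sub_cancel_left, norm_smul, hg, Real.norm_of_nonneg hhT.1.le]
        ring
  have hmem : c + h • g ∈ C := by
    refine ⟨by linarith [hhT.2], ?_⟩
    nlinarith [mul_le_mul_of_nonneg_left hdist (sub_pos.2 hε1).le]
  have hle : infDist (c + h • g) M ≤ infDist c M := hmax hmem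
  nlinarith [mul_pos (sub_pos.2 hε1) hhT.1]

theorem infDist_add_sq_sub_sq_le_of_mem_convexHull (hM : IsCompact M)
    {σ : Set (EuclideanSpace ℝ (Fin D))} (hσM : σ ⊆ M) {z : EuclideanSpace ℝ (Fin D)} {ρ : ℝ}
    (hσz : σ ⊆ closedBall z ρ) {w : EuclideanSpace ℝ (Fin D)} (hw : w ∈ convexHull ℝ σ)
    {T : ℝ} (hT : 0 ≤ T) (hreach : infDist w M + T ≤ reach M) :
    (infDist w M + T) ^ 2 - T ^ 2 ≤ ρ ^ 2 := by
  rcases (infDist_nonneg (x := w) (s := M)).eq_or_lt with hδ | hδ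
  · rw [← hδ]
    simpa using sq_nonneg ρ
  set δ := infDist w M
  have hlim : Tendsto (fun ε : ℝ => (δ + (1 - ε) * T) ^ 2 - T ^ 2) (𝓝[>] 0)
      (𝓝 ((δ + T) ^ 2 - T ^ 2)) :=
    ((by fun_prop : Continuous fun ε : ℝ => (δ + (1 - ε) * T) ^ 2 - T ^ 2).tendsto' 0 _
      (by simp)).mono_left nhdsWithin_le_nhds
  refine le_of_tendsto hlim ?_
  filter_upwards [Ioo_mem_nhdsGT zero_lt_one] with ε ⟨hε0, hε1⟩
  obtain ⟨c, hwc, hδc⟩ := exists_dist_le_and_add_le_infDist hM hδ hT hreach hε0 hε1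
  have hR : 0 ≤ δ + (1 - ε) * T := by nlinarith
  have hσc : ∀ x ∈ σ, δ + (1 - ε) * T ≤ dist x c := fun x hx =>
    hδc.trans (dist_comm c x ▸ infDist_le_dist_of_mem (hσM hx))
  have := sq_sub_sq_le_of_mem_convexHull hR hσc hσz hw
  nlinarith [pow_le_pow_left₀ dist_nonneg hwc 2, sq_nonneg (dist w z)]

theorem infDist_add_sq_sub_sq_le_sebRadius_sq (hM : IsCompact M)
    {σ : Set (EuclideanSpace ℝ (Fin D))} (hσM : σ ⊆ M) {w : EuclideanSpace ℝ (Fin D)}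
    (hw : w ∈ convexHull ℝ σ) {T : ℝ} (hT : 0 ≤ T) (hreach : infDist w M + T ≤ reach M) :
    (infDist w M + T) ^ 2 - T ^ 2 ≤ sebRadius σ ^ 2 := by
  refine ge_of_tendsto (x := 𝓝[>] sebRadius σ)
    ((continuous_pow 2).tendsto' _ _ rfl |>.mono_left nhdsWithin_le_nhds) ?_
  filter_upwards [self_mem_nhdsWithin] with ρ hρ
  obtain ⟨z, hz⟩ := exists_subset_closedBall_of_sebRadius_lt (hM.isBounded.subset hσM) hρ
  exact infDist_add_sq_sub_sq_le_of_mem_convexHull hM hσM hz hw hT hreach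

theorem infDist_le_reach_sub_sqrt_of_mem_convexHull (hM : IsCompact M)
    {σ : Set (EuclideanSpace ℝ (Fin D))} (hσM : σ ⊆ M) (hr : sebRadius σ < reach M)
    {y : EuclideanSpace ℝ (Fin D)} (hy : y ∈ convexHull ℝ σ) :
    infDist y M ≤ reach M - √(reach M ^ 2 - sebRadius σ ^ 2) := by
  obtain ⟨x₀, hx₀⟩ := convexHull_nonempty_iff.1 ⟨y, hy⟩
  set τ := reach M
  set r := sebRadius σ
  have hr0 : 0 ≤ r := sebRadius_nonneg ⟨x₀, hx₀⟩
  have hsqrt_le : √(τ ^ 2 - r ^ 2) ≤ τ := Real.sqrt_le_iff.2 ⟨by linarith, by nlinarith⟩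
  have hsqrt_pos : 0 < √(τ ^ 2 - r ^ 2) := Real.sqrt_pos.2 (by nlinarith)
  have hgap : ∀ s ∈ (infDist · M) '' convexHull ℝ σ, s ∉ Ioo (τ - √(τ ^ 2 - r ^ 2)) τ := by
    rintro _ ⟨w, hw, rfl⟩ ⟨hlow, hhigh⟩
    have hsq := infDist_add_sq_sub_sq_le_sebRadius_sq hM hσM hw (sub_nonneg.2 hhigh.le)
      (by rw [add_sub_cancel])
    have : √(τ ^ 2 - r ^ 2) ≤ τ - infDist w M := Real.sqrt_le_iff.2 ⟨by linarith, by nlinarith⟩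
    linarith
  refine ((convex_convexHull ℝ σ).isPreconnected.image _
    (continuous_infDist_pt M).continuousOn).subset_Iic_of_forall_notMem_Ioo
    ⟨x₀, subset_convexHull ℝ σ hx₀, infDist_zero_of_mem (hσM hx₀)⟩ (by linarith)
    (by linarith) hgap (mem_image_of_mem _ hy)

end Reach

theorem Real.one_sub_sqrt_one_sub_le {u : ℝ} (hu : 0 ≤ u) : 1 - √(1 - u) ≤ u / 2 * (1 + u) := by
  rcases le_or_gt u 1 with hu1 | hu1
  · set s := √(1 - u)
    have hs0 : 0 ≤ s := Real.sqrt_nonneg _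
    have hs2 : s ^ 2 = 1 - u := Real.sq_sqrt (by linarith)
    have hs1 : s ≤ 1 := by nlinarith
    -- with `u = 1 - s²` the gap is `s (1 - s)² (2 + s) / 2`
    nlinarith [mul_nonneg (mul_nonneg hs0 (sq_nonneg (1 - s))) (by linarith : (0:ℝ) ≤ 2 + s)]
  · nlinarith [Real.sqrt_nonneg (1 - u)]

theorem mul_one_sub_sqrt_one_sub_sq_div_sq {τ : ℝ} (hτ : 0 < τ) (r : ℝ) :
    τ * (1 - √(1 - r ^ 2 / τ ^ 2)) = τ - √(τ ^ 2 - r ^ 2) := by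
  rw [one_sub_div (by positivity), Real.sqrt_div' _ (by positivity), Real.sqrt_sq hτ.le]
  field_simp

theorem infDist_convexHull_le_general {D : ℕ} (M : Set (EuclideanSpace ℝ (Fin D)))
    (hMc : IsCompact M)
    (σ : Set (EuclideanSpace ℝ (Fin D))) (hσ : σ ⊆ M) (hr : sebRadius σ < reach M)
    (y : EuclideanSpace ℝ (Fin D)) (hy : y ∈ convexHull ℝ σ) :
    Metric.infDist y M ≤ reach M * (1 - Real.sqrt (1 - sebRadius σ ^ 2 / reach M ^ 2)) ∧
    reach M * (1 - Real.sqrt (1 - sebRadius σ ^ 2 / reach M ^ 2)) ≤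
      sebRadius σ ^ 2 / (2 * reach M) * (1 + sebRadius σ ^ 2 / reach M ^ 2) := by
  have hr0 : 0 ≤ sebRadius σ := sebRadius_nonneg (convexHull_nonempty_iff.1 ⟨y, hy⟩)
  have hτ : 0 < reach M := hr0.trans_lt hr
  refine ⟨?_, ?_⟩
  · rw [mul_one_sub_sqrt_one_sub_sq_div_sq hτ]
    exact infDist_le_reach_sub_sqrt_of_mem_convexHull hMc hσ hr hy
  · calc reach M * (1 - √(1 - sebRadius σ ^ 2 / reach M ^ 2))
        ≤ reach M * (sebRadius σ ^ 2 / reach M ^ 2 / 2 * (1 + sebRadius σ ^ 2 / reach M ^ 2)) :=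
          mul_le_mul_of_nonneg_left (Real.one_sub_sqrt_one_sub_le (by positivity)) hτ.le
      _ = sebRadius σ ^ 2 / (2 * reach M) * (1 + sebRadius σ ^ 2 / reach M ^ 2) := by
          field_simp

/-- For `σ ⊆ M` with `r(σ) < τ(M)`, every `y ∈ Conv(σ)` satisfies
`d(y,M) ≤ τ(M)(1 − √(1 − r(σ)²/τ(M)²)) ≤ (r(σ)²/(2τ(M)))(1 + r(σ)²/τ(M)²)`. -/
theorem infDist_convexHull_le {D d : ℕ} (M : Set (EuclideanSpace ℝ (Fin D)))
    (hMc : IsCompact M) (hM : IsC2Submanifold d M) (hτ : 0 < reach M)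
    (σ : Set (EuclideanSpace ℝ (Fin D))) (hσ : σ ⊆ M) (hr : sebRadius σ < reach M)
    (y : EuclideanSpace ℝ (Fin D)) (hy : y ∈ convexHull ℝ σ) :
    Metric.infDist y M ≤ reach M * (1 - Real.sqrt (1 - sebRadius σ ^ 2 / reach M ^ 2)) ∧
    reach M * (1 - Real.sqrt (1 - sebRadius σ ^ 2 / reach M ^ 2)) ≤
      sebRadius σ ^ 2 / (2 * reach M) * (1 + sebRadius σ ^ 2 / reach M ^ 2) :=
  infDist_convexHull_le_general M hMc σ hσ hr y hy
end
end

section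
/- Let A₁, …, A_n be i.i.d. standard exponential random variables and let A_(n) and A_(n−1) denote the largest and second-largest order statistics. Then for every real s > 1, P(A_(n)/A_(n−1) ≥ s) = n(n−1) B(s+1, n−1), where B is the Beta function; in particular P(A_(n)/A_(n−1) ≥ s) = n(n−1) ∫₀¹ x^s (1−x)^{n−2} dx. -/
open Metric Set

noncomputable section

variable {D d : ℕ}

/-!
For positive `x`, the largest coordinate is at least `s` times the second largest iff some
coordinate `i` dominates, `s * x j ≤ x i` for all `j ≠ i`. For `s > 1` these `n` events are
almost surely disjoint, and by independence each has probability
`∫ F (a / s) ^ (n - 1) dF(a) = ∫₀^∞ e^{-a} (1 - e^{-a/s}) ^ (n - 1) da`, where `F` is the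
exponential distribution function. The substitution `x = e^{-a/s}` turns this into `s B(s, n)`,
and the Beta recurrence gives `s B(s, n) = (n - 1) B(s + 1, n - 1)`.
-/

open MeasureTheory ProbabilityTheory Real

theorem image_exp_neg_Ioi_zero : (fun t : ℝ => exp (-t)) '' Ioi 0 = Ioo 0 1 := by
  ext x
  constructor
  · rintro ⟨t, ht, rfl⟩
    exact ⟨exp_pos _, exp_lt_one_iff.mpr (neg_lt_zero.mpr ht)⟩
  · rintro ⟨hx0, hx1⟩
    exact ⟨-log x, neg_pos.mpr (log_neg hx0 hx1), by simp [exp_log hx0]⟩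

theorem integral_comp_exp_neg_Ioi {E : Type*} [NormedAddCommGroup E] [NormedSpace ℝ E]
    (g : ℝ → E) : ∫ t in Ioi 0, exp (-t) • g (exp (-t)) = ∫ x in Ioo 0 1, g x := by
  rw [← image_exp_neg_Ioi_zero]
  simpa [abs_of_pos (exp_pos _)] using (integral_image_eq_integral_abs_deriv_smul
    measurableSet_Ioi (fun t _ => (hasDerivAt_neg t).exp.hasDerivWithinAt)
    (fun t _ u _ h => neg_injective (exp_injective h)) g).symm

theorem integral_exp_neg_mul_one_sub_exp_neg_div_pow {s : ℝ} (hs : 0 < s) (m : ℕ) :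
    ∫ a in Ioi 0, exp (-a) * (1 - exp (-(a / s))) ^ m
      = s * ∫ x in Ioo 0 1, x ^ (s - 1) * (1 - x) ^ m := by
  have hscale :=
    integral_comp_mul_left_Ioi' (fun a => exp (-a) * (1 - exp (-(a / s))) ^ m) 0 hs
  rw [mul_zero, smul_eq_mul] at hscale
  rw [← hscale, ← integral_comp_exp_neg_Ioi]
  congr 1
  refine setIntegral_congr_fun measurableSet_Ioi fun t _ => ?_
  have hexp : exp (-(s * t)) = exp (-t) * exp (-t) ^ (s - 1) := by
    rw [← exp_mul, ← exp_add]; ring_nf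
  simp only [smul_eq_mul, hexp, mul_div_cancel_left₀ t hs.ne']
  ring

theorem Complex.betaIntegral_ofReal (u v : ℝ) :
    Complex.betaIntegral u v = ↑(∫ x in (0 : ℝ)..1, x ^ (u - 1) * (1 - x) ^ (v - 1)) := by
  rw [Complex.betaIntegral, ← intervalIntegral.integral_ofReal]
  refine intervalIntegral.integral_congr fun x hx => ?_
  rw [uIcc_of_le zero_le_one] at hx
  push_cast
  rw [Complex.ofReal_cpow hx.1, Complex.ofReal_cpow (sub_nonneg.mpr hx.2)]
  push_cast; ring_nf

theorem Complex.betaIntegral_natCast_add_one_re (u : ℝ) (m : ℕ) :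
    (Complex.betaIntegral u (m + 1)).re = ∫ x in (0 : ℝ)..1, x ^ (u - 1) * (1 - x) ^ m := by
  have := Complex.betaIntegral_ofReal u (m + 1)
  push_cast at this
  simp [this, ← Real.rpow_natCast]

theorem Complex.betaIntegral_recurrence_re {u : ℝ} (hu : 0 < u) {m : ℕ} (hm : 0 < m) :
    u * (Complex.betaIntegral u (m + 1)).re = m * (Complex.betaIntegral (u + 1) m).re := by
  have h := Complex.betaIntegral_recurrence (u := u) (v := m) (by simpa) (by simpa)
  simpa using congrArg Complex.re h

theorem toReal_lintegral_measure_Iic_div_pow (ν : Measure ℝ) [IsProbabilityMeasure ν] (s : ℝ)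
    (m : ℕ) : (∫⁻ a, ν (Iic (a / s)) ^ m ∂ν).toReal = ∫ a, cdf ν (a / s) ^ m ∂ν := by
  simp_rw [← ofReal_cdf, ← ENNReal.ofReal_pow (cdf_nonneg _ _)]
  refine (integral_eq_lintegral_of_nonneg_ae
    (ae_of_all _ fun a => pow_nonneg (cdf_nonneg _ _) _) ?_).symm
  exact ((monotone_cdf ν).measurable.comp (measurable_id.div_const s)).pow_const m
    |>.aestronglyMeasurable

theorem integral_expMeasure_one {E : Type*} [NormedAddCommGroup E] [NormedSpace ℝ E]
    (f : ℝ → E) : ∫ a, f a ∂expMeasure 1 = ∫ a in Ioi 0, exp (-a) • f a := by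
  have hdens :
      expMeasure 1 = volume.withDensity fun a => ENNReal.ofReal (exponentialPDFReal 1 a) := rfl
  rw [hdens, integral_withDensity_eq_integral_toReal_smul
    (measurable_exponentialPDFReal 1).ennreal_ofReal (ae_of_all _ fun _ => ENNReal.ofReal_lt_top),
    ← integral_Ici_eq_integral_Ioi, ← integral_indicator measurableSet_Ici]
  congr 1 with a
  by_cases ha : 0 ≤ a
  · simp [exponentialPDFReal, gammaPDFReal, ha, (exp_pos _).le]
  · simp [exponentialPDFReal, gammaPDFReal, ha]

theorem ae_pos_expMeasure_one : ∀ᵐ a ∂expMeasure 1, 0 < a := by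
  have := isProbabilityMeasure_expMeasure (zero_lt_one' ℝ)
  rw [ae_iff]
  simp only [not_lt]
  change expMeasure 1 (Iic 0) = 0
  simp [← ofReal_cdf, cdf_expMeasure_eq one_pos]

theorem integral_cdf_expMeasure_one_div_pow {s : ℝ} (hs : 0 < s) (m : ℕ) :
    ∫ a, cdf (expMeasure 1) (a / s) ^ m ∂expMeasure 1
      = s * (Complex.betaIntegral s (m + 1)).re := by
  rw [integral_expMeasure_one, Complex.betaIntegral_natCast_add_one_re,
    intervalIntegral.integral_of_le zero_le_one, integral_Ioc_eq_integral_Ioo,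
    ← integral_exp_neg_mul_one_sub_exp_neg_div_pow hs]
  refine setIntegral_congr_fun measurableSet_Ioi fun a (ha : 0 < a) => ?_
  simp [cdf_expMeasure_eq one_pos, (div_pos ha hs).le]

theorem Tuple.le_apply_sort_top_div_apply_sort_second_iff {n : ℕ} (hn : 1 < n)
    {x : Fin n → ℝ} (hx : ∀ i, 0 < x i) {s : ℝ} (hs : 1 < s) :
    s ≤ x (Tuple.sort x ⟨n - 1, by omega⟩) / x (Tuple.sort x ⟨n - 2, by omega⟩) ↔
      ∃ i, ∀ j ≠ i, s * x j ≤ x i := by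
  set σ := Tuple.sort x
  set top : Fin n := ⟨n - 1, by omega⟩
  set second : Fin n := ⟨n - 2, by omega⟩
  have le_of_symm_le {j k} (h : σ.symm j ≤ k) : x j ≤ x (σ k) := by
    simpa [σ] using Tuple.monotone_sort x h
  have le_top (j) : x j ≤ x (σ top) := le_of_symm_le (Fin.le_def.mpr (by simp [top]; omega))
  have le_second (j) (hj : j ≠ σ top) : x j ≤ x (σ second) := by
    refine le_of_symm_le (Fin.le_def.mpr ?_)
    have : σ.symm j ≠ top := fun h => hj (by rw [← h, Equiv.apply_symm_apply])
    have := Fin.val_ne_of_ne this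
    simp [second, top] at this ⊢
    omega
  rw [le_div_iff₀ (hx _)]
  constructor
  · intro h
    exact ⟨σ top, fun j hj => (mul_le_mul_of_nonneg_left (le_second j hj) (by linarith)).trans h⟩
  · rintro ⟨i, hi⟩
    obtain rfl : σ top = i := by
      by_contra h
      nlinarith [hi _ h, le_top i, hx (σ top)]
    refine hi _ fun h => ?_
    have := Fin.val_eq_of_eq (σ.injective h)
    simp [second, top] at this
    omega

theorem MeasureTheory.Measure.pi_setOf_forall_ne_mul_le (ν : Measure ℝ) [SigmaFinite ν]
    {m : ℕ} (i : Fin (m + 1)) {s : ℝ} (hs : 0 < s) :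
    Measure.pi (fun _ => ν) {x | ∀ j ≠ i, s * x j ≤ x i} = ∫⁻ a, ν (Iic (a / s)) ^ m ∂ν := by
  set T : Set (ℝ × (Fin m → ℝ)) := {p | ∀ k, s * p.2 k ≤ p.1}
  have hT : MeasurableSet T := by
    simp only [T, ofPred_forall]
    exact .iInter fun k => measurableSet_le (by fun_prop) measurable_fst
  have hpre : MeasurableEquiv.piFinSuccAbove (fun _ => ℝ) i ⁻¹' T
      = {x | ∀ j ≠ i, s * x j ≤ x i} := by
    ext x
    simp only [T, mem_preimage, mem_ofPred_eq, MeasurableEquiv.piFinSuccAbove_apply]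
    exact ⟨fun h j hj => by obtain ⟨k, rfl⟩ := Fin.exists_succAbove_eq hj; exact h k,
      fun h k => h _ (Fin.succAbove_ne i k)⟩
  have hslice (a : ℝ) : Prod.mk a ⁻¹' T = Set.pi univ fun _ => Iic (a / s) := by
    ext y
    simp only [T, mem_preimage, mem_ofPred_eq, Set.mem_pi, mem_univ, true_implies, mem_Iic,
      le_div_iff₀ hs, mul_comm]
  rw [← hpre, (measurePreserving_piFinSuccAbove (fun _ => ν) i).measure_preimage
    hT.nullMeasurableSet, Measure.prod_apply hT]
  simp_rw [hslice, Measure.pi_pi, Finset.prod_const, Finset.card_univ, Fintype.card_fin]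

theorem measurableSet_setOf_forall_ne_mul_le {n : ℕ} (i : Fin n) (s : ℝ) :
    MeasurableSet {x : Fin n → ℝ | ∀ j ≠ i, s * x j ≤ x i} := by
  simp only [ofPred_forall]
  exact .iInter fun j => .iInter fun _ => measurableSet_le (by fun_prop) (by fun_prop)

section PositiveIID

variable {ν : Measure ℝ} [SigmaFinite ν] {s : ℝ}

theorem ae_pi_forall_pos (hν : ∀ᵐ a ∂ν, 0 < a) (n : ℕ) :
    ∀ᵐ x ∂Measure.pi fun _ : Fin n => ν, ∀ i, 0 < x i :=
  ae_all_iff.mpr fun _ => Measure.tendsto_eval_ae_ae.eventually hν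

theorem pi_iUnion_setOf_forall_ne_mul_le (hν : ∀ᵐ a ∂ν, 0 < a) (hs : 1 < s) (n : ℕ) :
    Measure.pi (fun _ : Fin n => ν) (⋃ i, {x | ∀ j ≠ i, s * x j ≤ x i})
      = n * ∫⁻ a, ν (Iic (a / s)) ^ (n - 1) ∂ν := by
  cases n with
  | zero => simp
  | succ m =>
    have hdisj : Pairwise (Function.onFun (AEDisjoint (Measure.pi fun _ => ν))
        fun i : Fin (m + 1) => {x | ∀ j ≠ i, s * x j ≤ x i}) := by
      intro i j hij
      refine measure_mono_null (fun x ⟨hi, hj⟩ => ?_) (ae_pi_forall_pos hν _)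
      show ¬∀ k, 0 < x k
      -- `s * x j ≤ x i` and `s * x i ≤ x j` with `s > 1` force a nonpositive coordinate
      intro hx
      nlinarith [hi j hij.symm, hj i hij, hx i, hx j]
    rw [measure_iUnion₀ hdisj fun i =>
      (measurableSet_setOf_forall_ne_mul_le i s).nullMeasurableSet, tsum_fintype]
    simp [Measure.pi_setOf_forall_ne_mul_le ν _ (by linarith : 0 < s)]

theorem setOf_le_sort_top_div_sort_second_ae_eq_iUnion (hν : ∀ᵐ a ∂ν, 0 < a) (hs : 1 < s)
    {n : ℕ} (hn : 1 < n) :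
    {x : Fin n → ℝ |
        s ≤ x (Tuple.sort x ⟨n - 1, by omega⟩) / x (Tuple.sort x ⟨n - 2, by omega⟩)}
      =ᵐ[Measure.pi fun _ => ν] ⋃ i, {x | ∀ j ≠ i, s * x j ≤ x i} := by
  refine Filter.eventuallyEq_set.mpr ?_
  filter_upwards [ae_pi_forall_pos hν n] with x hx
  simpa only [mem_ofPred_eq, mem_iUnion] using
    Tuple.le_apply_sort_top_div_apply_sort_second_iff hn hx hs

theorem measure_le_sort_top_div_sort_second {Ω : Type*} [MeasurableSpace Ω] {μ : Measure Ω}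
    {n : ℕ} (hn : 1 < n) {X : Ω → Fin n → ℝ} (hX : AEMeasurable X μ)
    (hlaw : μ.map X = Measure.pi fun _ => ν) (hν : ∀ᵐ a ∂ν, 0 < a) (hs : 1 < s) :
    μ {ω | s ≤ X ω (Tuple.sort (X ω) ⟨n - 1, by omega⟩) /
        X ω (Tuple.sort (X ω) ⟨n - 2, by omega⟩)} = n * ∫⁻ a, ν (Iic (a / s)) ^ (n - 1) ∂ν := by
  have hevent := setOf_le_sort_top_div_sort_second_ae_eq_iUnion hν hs hn
  rw [← pi_iUnion_setOf_forall_ne_mul_le hν hs n, ← measure_congr hevent, ← hlaw,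
    Measure.map_apply₀ hX]
  · rfl
  rw [hlaw]
  exact (MeasurableSet.iUnion fun i => measurableSet_setOf_forall_ne_mul_le i s)
    |>.nullMeasurableSet.congr hevent.symm

end PositiveIID

open MeasureTheory ProbabilityTheory in
/-- For an i.i.d. sample `A₁, …, A_n` of standard exponential random variables and `s > 1`,
`P(A_(n)/A_(n−1) ≥ s) = n(n−1) B(s+1, n−1) = n(n−1) ∫₀¹ x^s (1−x)^{n−2} dx`. -/
theorem exp_order_stat_ratio {Ω : Type*} [MeasurableSpace Ω]
    (μ : Measure Ω) (n : ℕ) (hn : 2 ≤ n)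
    (A : Fin n → Ω → ℝ) (hmeas : ∀ i, Measurable (A i))
    (hindep : iIndepFun A μ)
    (hdist : ∀ i, μ.map (A i) = expMeasure 1)
    (s : ℝ) (hs : 1 < s) :
    (μ {ω | s ≤ A (Tuple.sort (fun i => A i ω) ⟨n - 1, by omega⟩) ω /
        A (Tuple.sort (fun i => A i ω) ⟨n - 2, by omega⟩) ω}).toReal =
      n * (n - 1) * (Complex.betaIntegral (s + 1) (n - 1)).re ∧
    (n : ℝ) * (n - 1) * (Complex.betaIntegral (s + 1) (n - 1)).re =
      n * (n - 1) * ∫ x in (0 : ℝ)..1, x ^ s * (1 - x) ^ (n - 2) := by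
  have := isProbabilityMeasure_expMeasure (zero_lt_one' ℝ)
  have hlaw : μ.map (fun ω i => A i ω) = Measure.pi fun _ => expMeasure 1 := by
    simp_rw [hindep.map_fun_eq_pi_map fun i => (hmeas i).aemeasurable, hdist]
  have hprob := measure_le_sort_top_div_sort_second hn (measurable_pi_iff.mpr hmeas).aemeasurable
    hlaw ae_pos_expMeasure_one hs
  obtain ⟨m, rfl⟩ : ∃ m, n = m + 2 := ⟨n - 2, by omega⟩
  have hcast : ((m + 2 : ℕ) : ℂ) - 1 = ((m + 1 : ℕ) : ℂ) := by push_cast; ring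
  constructor
  · rw [hprob, ENNReal.toReal_mul, ENNReal.toReal_natCast, toReal_lintegral_measure_Iic_div_pow,
      integral_cdf_expMeasure_one_div_pow (by linarith), show m + 2 - 1 = m + 1 from rfl, hcast,
      Complex.betaIntegral_recurrence_re (by linarith) m.succ_pos]
    push_cast
    ring
  · have hshift : (s : ℂ) + 1 = ((s + 1 : ℝ) : ℂ) := by push_cast; rfl
    rw [hcast, hshift, Nat.cast_succ (R := ℂ), Complex.betaIntegral_natCast_add_one_re,
      add_sub_cancel_right, Nat.add_sub_cancel]
end
end
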